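/- Let J : ℕ → ℕ satisfy J(0) = 1 and J(k+1) = 2(k+1)·J(k) + Σ_{i=2}^{k+1} C(k+1, i) · J(k+1-i), and define L(k) = Σ_{i=1}^{k} C(k, i) · J(i) for k ≥ 1 together with L(0) = 1. Then the exponential generating function of L equals exp(X) · f(X), where f is the exponential generating function of J; equivalently, (2 - X - exp(X)) · (Σ_k L(k) X^k/k!) = exp(X) as formal power series. -/

import Mathlib

/-!
On exponential generating functions the binomial transform `a ↦ (n ↦ Σ_i C(n, i) a(i))` is
multiplication by `exp X`, and `a ↦ (n ↦ n a(n-1))` is multiplication by `X`. Reflecting the sum,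
the recurrence for `J` reads `2 J(k+1) = (k+1) J(k) + Σ_{i ≤ k+1} C(k+1, i) J(i)`, so the EGF `f`
of `J` satisfies `2f = Xf + e^X f + 1` (the `1` from `J(0) = 1`), i.e. `(2 - X - e^X) f = 1`.
As `EGF(L) = e^X f`, multiplying by `e^X` gives the second identity.
-/

open PowerSeries Finset
open scoped Nat

def binomialTransform {R : Type*} [Semiring R] (a : ℕ → R) (n : ℕ) : R :=
  ∑ i ∈ range (n + 1), n.choose i * a i

@[norm_cast]
theorem Nat.cast_binomialTransform {R : Type*} [Semiring R] (a : ℕ → ℕ) (n : ℕ) :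
    ((binomialTransform a n : ℕ) : R) = binomialTransform (fun i => (a i : R)) n := by
  simp [binomialTransform]

section Egf

variable {A : Type*} [Field A] [Algebra ℚ A]

def egf (a : ℕ → A) : PowerSeries A :=
  mk fun n => a n / n !

omit [Algebra ℚ A] in
theorem coeff_egf (a : ℕ → A) (n : ℕ) : coeff n (egf a) = a n / n ! :=
  coeff_mk _ _

theorem X_mul_egf (a : ℕ → A) : X * egf a = egf fun n => n * a (n - 1) := by
  have := Algebra.charZero_of_charZero ℚ A
  ext (_ | n)
  · simp [coeff_egf]
  · rw [coeff_succ_X_mul, coeff_egf, coeff_egf, Nat.factorial_succ]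
    push_cast
    field_simp

theorem exp_mul_egf (a : ℕ → A) : exp A * egf a = egf (binomialTransform a) := by
  have := Algebra.charZero_of_charZero ℚ A
  ext n
  rw [mul_comm, coeff_mul, Nat.sum_antidiagonal_eq_sum_range_succ_mk, coeff_egf,
    binomialTransform, sum_div]
  refine sum_congr rfl fun i hi => ?_
  have hin : i ≤ n := mem_range_succ_iff.mp hi
  rw [coeff_egf, coeff_exp, Nat.cast_choose A hin]
  simp only [one_div, map_inv₀, map_natCast]
  have : (n ! : A) ≠ 0 := Nat.cast_ne_zero.mpr n.factorial_ne_zero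
  field_simp

theorem two_sub_X_sub_exp_mul_egf {a : ℕ → A} (h0 : a 0 = 1)
    (hrec : ∀ k, 2 * a (k + 1) = (k + 1) * a k + binomialTransform a (k + 1)) :
    (2 - X - exp A) * egf a = 1 := by
  have hlin : (2 - X - exp A) * egf a =
      egf fun n => 2 * a n - n * a (n - 1) - binomialTransform a n := by
    rw [sub_mul, sub_mul, X_mul_egf, exp_mul_egf]
    ext n
    simp only [map_sub, coeff_egf, show (2 : PowerSeries A) = C 2 from rfl, coeff_C_mul]
    ring
  rw [hlin]
  ext (_ | n)
  · norm_num [coeff_egf, binomialTransform, h0]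
  · simp [coeff_egf, hrec, coeff_one]

end Egf

theorem two_mul_succ_eq_add_binomialTransform (J : ℕ → ℕ)
    (hJ : ∀ k, J (k + 1) =
      2 * (k + 1) * J k + ∑ i ∈ Icc 2 (k + 1), (k + 1).choose i * J (k + 1 - i)) (k : ℕ) :
    2 * J (k + 1) = (k + 1) * J k + binomialTransform J (k + 1) := by
  have hreflect : ∑ i ∈ Icc 2 (k + 1), (k + 1).choose i * J (k + 1 - i) =
      ∑ j ∈ range k, (k + 1).choose j * J j := by
    refine sum_nbij' (fun i => k + 1 - i) (fun j => k + 1 - j) ?_ ?_ ?_ ?_ ?_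
    all_goals intro i hi; simp only [mem_Icc, mem_range] at hi
    · simp only [mem_range]; omega
    · simp only [mem_Icc]; omega
    · omega
    · omega
    · rw [Nat.choose_symm (by omega)]
  simp only [binomialTransform, Nat.cast_id]
  rw [sum_range_succ, sum_range_succ, Nat.choose_succ_self_right, Nat.choose_self, ← hreflect,
    hJ k]
  ring

/-- Binomial transform identity for EGFs: with `J` as before and
`L k = Σ_{i=0}^{k} C(k,i) J(i)` (the `i = 0` term `C(k,0)·J(0)` contributing `1`),
the exponential generating function of `L` is `exp X` times that of `J`;
equivalently `(2 - X - exp X) * EGF(L) = exp X` in `ℚ[[X]]`. -/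
theorem homogColored_total_egf (J L : ℕ → ℕ) (hJ0 : J 0 = 1)
    (hJ : ∀ k, J (k + 1) =
      2 * (k + 1) * J k + ∑ i ∈ Finset.Icc 2 (k + 1), (k + 1).choose i * J (k + 1 - i))
    (hL : ∀ k, L k = ∑ i ∈ Finset.range (k + 1), k.choose i * J i) :
    PowerSeries.mk (fun k => (L k : ℚ) / (Nat.factorial k : ℚ)) =
      PowerSeries.exp ℚ * PowerSeries.mk (fun k => (J k : ℚ) / (Nat.factorial k : ℚ)) ∧
    (2 - PowerSeries.X - PowerSeries.exp ℚ) *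
      PowerSeries.mk (fun k => (L k : ℚ) / (Nat.factorial k : ℚ)) = PowerSeries.exp ℚ := by
  change egf _ = exp ℚ * egf _ ∧ (2 - X - exp ℚ) * egf _ = exp ℚ
  have hLJ : (fun k => (L k : ℚ)) = binomialTransform fun k => (J k : ℚ) := by
    funext k
    rw [hL k]
    exact Nat.cast_binomialTransform J k
  have hrec (k : ℕ) : 2 * (J (k + 1) : ℚ) =
      (k + 1) * J k + binomialTransform (fun k => (J k : ℚ)) (k + 1) :=
    mod_cast two_mul_succ_eq_add_binomialTransform J hJ k
  have hegf : egf (fun k => (L k : ℚ)) = exp ℚ * egf fun k => (J k : ℚ) := by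
    rw [hLJ]
    exact (exp_mul_egf _).symm
  refine ⟨hegf, ?_⟩
  have hJinv := two_sub_X_sub_exp_mul_egf (a := fun k => (J k : ℚ)) (by simp [hJ0]) hrec
  rw [hegf, mul_left_comm, hJinv, mul_one]
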